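/- Let V(P, J₁, {a, b}) = ∫_{J₁} min{(x−a)², (x−b)²} dP be the quantization error due to two points a < b on J₁ = [0,1/4] with b = 1/4. Then the minimizing a equals the conditional expectation E(X : X ∈ J₁₁ ∪ J₁₂₁) = 29/336, and the minimal value is V(P, J₁, {a, 1/4}) = 7711/17547264. -/

import Mathlib

open MeasureTheory Set
open scoped ENNReal Classical

noncomputable section

/-- The similarity map `S₁(x) = x/4`. -/
def S1 (x : ℝ) : ℝ := x / 4

/-- The similarity map `S₂(x) = x/2 + 1/2`. -/
def S2 (x : ℝ) : ℝ := x / 2 + 1 / 2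

/-- `P` satisfies the self-similarity relation `P = (1/4)·P∘S₁⁻¹ + (3/4)·P∘S₂⁻¹`. -/
def SelfSimilar (P : Measure ℝ) : Prop :=
  P = (1/4 : ℝ≥0∞) • P.map S1 + (3/4 : ℝ≥0∞) • P.map S2

/-- For a word `σ` over `{1,2}` (encoded as `Fin 2`, `0 ↦ S₁`, `1 ↦ S₂`),
the composition `S_σ = S_{σ₁} ∘ ⋯ ∘ S_{σ_k}`. -/
def Sw : List (Fin 2) → ℝ → ℝ
  | [] => id
  | i :: σ => (if i = 0 then S1 else S2) ∘ Sw σ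

/-- `p_σ`, the product of the probabilities `p₁ = 1/4`, `p₂ = 3/4` along `σ`. -/
def pw : List (Fin 2) → ℝ
  | [] => 1
  | i :: σ => (if i = 0 then (1:ℝ)/4 else 3/4) * pw σ

/-- `s_σ`, the product of the contraction ratios `s₁ = 1/4`, `s₂ = 1/2` along `σ`. -/
def sw : List (Fin 2) → ℝ
  | [] => 1
  | i :: σ => (if i = 0 then (1:ℝ)/4 else 1/2) * sw σ

/-- `c(σ)`, the number of occurrences of the symbol `1` (encoded `0`) in `σ`. -/
def cnt (σ : List (Fin 2)) : ℕ := σ.count 0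

/-- The cylinder interval `J_σ = S_σ([0,1])`. -/
def J (σ : List (Fin 2)) : Set ℝ := Sw σ '' Set.Icc 0 1

/-- The distortion error `V(P;α) = ∫ min_{a ∈ α} (x-a)² dP`. -/
def distortion (P : Measure ℝ) (α : Finset ℝ) : ℝ :=
  ∫ x, sInf ((fun a => (x - a) ^ 2) '' (α : Set ℝ)) ∂P

/-- The `n`-th quantization error `V_n`. -/
def qError (P : Measure ℝ) (n : ℕ) : ℝ :=
  sInf {e | ∃ α : Finset ℝ, α.Nonempty ∧ α.card ≤ n ∧ e = distortion P α}

/-- `α` is an optimal set of `n`-means for `P`. -/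
def IsOptimal (P : Measure ℝ) (n : ℕ) (α : Finset ℝ) : Prop :=
  α.Nonempty ∧ α.card ≤ n ∧ distortion P α = qError P n

/-- `q_σ := P(J_σ) · λ(J_σ)²`. -/
def qnt (P : Measure ℝ) (σ : List (Fin 2)) : ℝ :=
  (P (J σ)).toReal * ((volume (J σ)).toReal) ^ 2

lemma S1_cont : Continuous S1 := continuous_id.div_const 4
lemma S2_cont : Continuous S2 := (continuous_id.div_const 2).add continuous_const
lemma S1_meas : Measurable S1 := S1_cont.measurable
lemma S2_meas : Measurable S2 := S2_cont.measurable

lemma avg_eq {A B u : ℝ≥0∞} (hu : u ≠ ⊤) (hA : A ≤ u) (hB : B ≤ u)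
    (h : (1/4) * A + (3/4) * B = u) : A = u ∧ B = u := by
  have hAt : A ≠ ⊤ := (lt_of_le_of_lt hA hu.lt_top).ne
  have hBt : B ≠ ⊤ := (lt_of_le_of_lt hB hu.lt_top).ne
  have h4 : ((1:ℝ≥0∞)/4).toReal = (1:ℝ)/4 := by norm_num
  have h34 : ((3:ℝ≥0∞)/4).toReal = (3:ℝ)/4 := by norm_num
  have hr : (1:ℝ)/4 * A.toReal + 3/4 * B.toReal = u.toReal := by
    rw [← h, ENNReal.toReal_add (ENNReal.mul_ne_top (ENNReal.div_lt_top (by norm_num) (by norm_num)).ne hAt) (ENNReal.mul_ne_top (ENNReal.div_lt_top (by norm_num) (by norm_num)).ne hBt), ENNReal.toReal_mul,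
      ENNReal.toReal_mul, h4, h34]
  have hAr : A.toReal ≤ u.toReal := ENNReal.toReal_le_toReal hAt hu |>.mpr hA
  have hBr : B.toReal ≤ u.toReal := ENNReal.toReal_le_toReal hBt hu |>.mpr hB
  constructor
  · exact (ENNReal.toReal_eq_toReal_iff' hAt hu).mp (by linarith)
  · exact (ENNReal.toReal_eq_toReal_iff' hBt hu).mp (by linarith)

lemma meas_eq {P : Measure ℝ} (hP : SelfSimilar P) {s : Set ℝ} (hs : MeasurableSet s) :
    P s = 1/4 * P (S1 ⁻¹' s) + 3/4 * P (S2 ⁻¹' s) := by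
  conv_lhs => rw [hP]
  simp [Measure.map_apply S1_meas hs, Measure.map_apply S2_meas hs]

lemma preim_S1_Iio (c : ℝ) : S1 ⁻¹' (Iio c) = Iio (4*c) := by
  ext x; simp only [S1, mem_preimage, mem_Iio]; constructor <;> intro <;> linarith

lemma preim_S2_Iio (c : ℝ) : S2 ⁻¹' (Iio c) = Iio (2*c-1) := by
  ext x; simp only [S2, mem_preimage, mem_Iio]; constructor <;> intro <;> linarith

lemma preim_S1_Ioi (c : ℝ) : S1 ⁻¹' (Ioi c) = Ioi (4*c) := by
  ext x; simp only [S1, mem_preimage, mem_Ioi]; constructor <;> intro <;> linarith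

lemma preim_S2_Ioi (c : ℝ) : S2 ⁻¹' (Ioi c) = Ioi (2*c-1) := by
  ext x; simp only [S2, mem_preimage, mem_Ioi]; constructor <;> intro <;> linarith

lemma left_null (P : Measure ℝ) [IsProbabilityMeasure P] (hP : SelfSimilar P) :
    P (Iio (0:ℝ)) = 0 := by
  have key : ∀ n : ℕ, P (Iio ((1:ℝ) - 2^n)) = P (Iio (0:ℝ)) := by
    intro n
    induction n with
    | zero => norm_num
    | succ n ih =>
      have hc : (1:ℝ) - 2^n ≤ 0 := by
        have : (1:ℝ) ≤ 2^n := one_le_pow₀ (by norm_num)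
        linarith
      have h := meas_eq hP (measurableSet_Iio (a := (1:ℝ) - 2^n))
      rw [preim_S1_Iio, preim_S2_Iio, ih] at h
      have hA : P (Iio (4*((1:ℝ)-2^n))) ≤ P (Iio (0:ℝ)) :=
        measure_mono (Iio_subset_Iio (by linarith))
      have hB : P (Iio (2*((1:ℝ)-2^n)-1)) ≤ P (Iio (0:ℝ)) :=
        measure_mono (Iio_subset_Iio (by linarith))
      have := (avg_eq (measure_ne_top P _) hA hB h.symm).2
      have he : (2:ℝ)*((1:ℝ)-2^n)-1 = 1 - 2^(n+1) := by ring
      rw [he] at this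
      exact this
  have hanti : Antitone (fun n : ℕ => Iio ((1:ℝ) - 2^n)) := by
    intro m n hmn
    exact Iio_subset_Iio (by
      have : (2:ℝ)^m ≤ 2^n := pow_le_pow_right₀ (by norm_num) hmn
      linarith)
  have hempty : (⋂ n : ℕ, Iio ((1:ℝ) - 2^n)) = ∅ := by
    ext x
    simp only [mem_iInter, mem_Iio, mem_empty_iff_false, iff_false, not_forall, not_lt]
    obtain ⟨n, hn⟩ := pow_unbounded_of_one_lt (1 - x) (by norm_num : (1:ℝ) < 2)
    exact ⟨n, by linarith⟩
  have := hanti.measure_iInter (μ := P)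
    (fun n => (measurableSet_Iio).nullMeasurableSet) ⟨0, measure_ne_top P _⟩
  rw [hempty] at this
  simp only [measure_empty] at this
  rw [funext fun n => key n] at this
  simpa using this.symm

lemma right_null (P : Measure ℝ) [IsProbabilityMeasure P] (hP : SelfSimilar P) :
    P (Ioi (1:ℝ)) = 0 := by
  have key : ∀ n : ℕ, P (Ioi ((4:ℝ)^n)) = P (Ioi (1:ℝ)) := by
    intro n
    induction n with
    | zero => norm_num
    | succ n ih =>
      have hc : (1:ℝ) ≤ 4^n := one_le_pow₀ (by norm_num)
      have h := meas_eq hP (measurableSet_Ioi (a := (4:ℝ)^n))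
      rw [preim_S1_Ioi, preim_S2_Ioi, ih] at h
      have hA : P (Ioi (4*(4:ℝ)^n)) ≤ P (Ioi (1:ℝ)) :=
        measure_mono (Ioi_subset_Ioi (by linarith))
      have hB : P (Ioi (2*(4:ℝ)^n-1)) ≤ P (Ioi (1:ℝ)) :=
        measure_mono (Ioi_subset_Ioi (by linarith))
      have := (avg_eq (measure_ne_top P _) hA hB h.symm).1
      have he : (4:ℝ)*(4:ℝ)^n = 4^(n+1) := by ring
      rw [he] at this
      exact this
  have hanti : Antitone (fun n : ℕ => Ioi ((4:ℝ)^n)) := by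
    intro m n hmn
    exact Ioi_subset_Ioi (pow_le_pow_right₀ (by norm_num) hmn)
  have hempty : (⋂ n : ℕ, Ioi ((4:ℝ)^n)) = ∅ := by
    ext x
    simp only [mem_iInter, mem_Ioi, mem_empty_iff_false, iff_false, not_forall, not_lt]
    obtain ⟨n, hn⟩ := pow_unbounded_of_one_lt x (by norm_num : (1:ℝ) < 4)
    exact ⟨n, hn.le⟩
  have := hanti.measure_iInter (μ := P)
    (fun n => (measurableSet_Ioi).nullMeasurableSet) ⟨0, measure_ne_top P _⟩
  rw [hempty] at this
  simp only [measure_empty] at this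
  rw [funext fun n => key n] at this
  simpa using this.symm

lemma supp_ae (P : Measure ℝ) [IsProbabilityMeasure P] (hP : SelfSimilar P) :
    ∀ᵐ x ∂P, x ∈ Icc (0:ℝ) 1 := by
  have h : P (Icc (0:ℝ) 1)ᶜ = 0 := by
    have hc : (Icc (0:ℝ) 1)ᶜ = Iio 0 ∪ Ioi 1 := by
      ext x
      simp only [mem_compl_iff, mem_Icc, mem_union, mem_Iio, mem_Ioi, not_and_or, not_le]
    rw [hc]
    exact measure_union_null (left_null P hP) (right_null P hP)
  rw [ae_iff]
  exact h

lemma restrict_eq (P : Measure ℝ) [IsProbabilityMeasure P] (hP : SelfSimilar P) :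
    P.restrict (Icc (0:ℝ) 1) = P :=
  Measure.restrict_eq_self_of_ae_mem (supp_ae P hP)

lemma integrable_of_cont {f : ℝ → ℝ} (hf : Continuous f)
    (μ : Measure ℝ) [IsFiniteMeasure μ] (hμ : μ.restrict (Icc 0 1) = μ) :
    Integrable f μ := by
  rw [← hμ]
  exact hf.continuousOn.integrableOn_compact isCompact_Icc

lemma map_S1_ae (P : Measure ℝ) [IsProbabilityMeasure P] (hP : SelfSimilar P) :
    (P.map S1).restrict (Icc 0 1) = P.map S1 := by
  apply Measure.restrict_eq_self_of_ae_mem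
  rw [ae_map_iff (p := fun y => y ∈ Icc (0:ℝ) 1) S1_meas.aemeasurable measurableSet_Icc]
  filter_upwards [supp_ae P hP] with x hx
  exact ⟨by simp only [S1]; linarith [hx.1], by simp only [S1]; linarith [hx.2]⟩

lemma map_S2_ae (P : Measure ℝ) [IsProbabilityMeasure P] (hP : SelfSimilar P) :
    (P.map S2).restrict (Icc 0 1) = P.map S2 := by
  apply Measure.restrict_eq_self_of_ae_mem
  rw [ae_map_iff (p := fun y => y ∈ Icc (0:ℝ) 1) S2_meas.aemeasurable measurableSet_Icc]
  filter_upwards [supp_ae P hP] with x hx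
  exact ⟨by simp only [S2]; linarith [hx.1], by simp only [S2]; linarith [hx.2]⟩

variable {P : Measure ℝ} [IsProbabilityMeasure P]

lemma int_P (hP : SelfSimilar P) {f : ℝ → ℝ} (hf : Continuous f) : Integrable f P :=
  integrable_of_cont hf P (restrict_eq P hP)

lemma int_map_S1 (hP : SelfSimilar P) {f : ℝ → ℝ} (hf : Continuous f) :
    Integrable f (P.map S1) := by
  haveI : IsProbabilityMeasure (P.map S1) :=
    Measure.isProbabilityMeasure_map S1_meas.aemeasurable
  exact integrable_of_cont hf _ (map_S1_ae P hP)

lemma int_map_S2 (hP : SelfSimilar P) {f : ℝ → ℝ} (hf : Continuous f) :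
    Integrable f (P.map S2) := by
  haveI : IsProbabilityMeasure (P.map S2) :=
    Measure.isProbabilityMeasure_map S2_meas.aemeasurable
  exact integrable_of_cont hf _ (map_S2_ae P hP)

lemma toReal14 : ((1:ℝ≥0∞)/4).toReal = (1:ℝ)/4 := by norm_num
lemma toReal34 : ((3:ℝ≥0∞)/4).toReal = (3:ℝ)/4 := by norm_num
lemma ne_top14 : ((1:ℝ≥0∞)/4) ≠ ⊤ := (ENNReal.div_lt_top (by norm_num) (by norm_num)).ne
lemma ne_top34 : ((3:ℝ≥0∞)/4) ≠ ⊤ := (ENNReal.div_lt_top (by norm_num) (by norm_num)).ne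

/-- Full-space splitting. -/
lemma split (hP : SelfSimilar P) {f : ℝ → ℝ} (hf : Continuous f) :
    ∫ x, f x ∂P = (1/4) * ∫ x, f (S1 x) ∂P + (3/4) * ∫ x, f (S2 x) ∂P := by
  conv_lhs => rw [hP]
  rw [integral_add_measure
      ((int_map_S1 hP hf).smul_measure ne_top14)
      ((int_map_S2 hP hf).smul_measure ne_top34),
    integral_smul_measure, integral_smul_measure,
    integral_map S1_meas.aemeasurable hf.aestronglyMeasurable,
    integral_map S2_meas.aemeasurable hf.aestronglyMeasurable,
    toReal14, toReal34, smul_eq_mul, smul_eq_mul]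

lemma preim_S1_J : S1 ⁻¹' (Icc (0:ℝ) (1/4)) = Icc (0:ℝ) 1 := by
  ext x
  simp only [S1, mem_preimage, mem_Icc]
  constructor <;> intro h <;> exact ⟨by linarith [h.1], by linarith [h.2]⟩

lemma preim_S2_J : S2 ⁻¹' (Icc (0:ℝ) (1/4)) = Icc (-1:ℝ) (-1/2) := by
  ext x
  simp only [S2, mem_preimage, mem_Icc]
  constructor <;> intro h <;> exact ⟨by linarith [h.1], by linarith [h.2]⟩

/-- First-step set splitting. -/
lemma split_set (hP : SelfSimilar P) {f : ℝ → ℝ} (hf : Continuous f) :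
    ∫ x in Icc (0:ℝ) (1/4), f x ∂P = (1/4) * ∫ x, f (S1 x) ∂P := by
  have hnull : P (Icc (-1:ℝ) (-1/2)) = 0 := by
    apply measure_mono_null _ (left_null P hP)
    intro x hx
    simp only [mem_Icc] at hx
    simp only [mem_Iio]
    linarith [hx.2]
  conv_lhs => rw [hP]
  rw [Measure.restrict_add, Measure.restrict_smul, Measure.restrict_smul,
    integral_add_measure
      (((int_map_S1 hP hf).integrableOn).smul_measure ne_top14)
      (((int_map_S2 hP hf).integrableOn).smul_measure ne_top34),
    integral_smul_measure, integral_smul_measure,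
    setIntegral_map measurableSet_Icc hf.aestronglyMeasurable S1_meas.aemeasurable,
    setIntegral_map measurableSet_Icc hf.aestronglyMeasurable S2_meas.aemeasurable,
    preim_S1_J, preim_S2_J, toReal14, toReal34]
  rw [Measure.restrict_eq_zero.mpr hnull, integral_zero_measure]
  rw [restrict_eq P hP]
  rw [smul_eq_mul, smul_eq_mul]
  ring

lemma mom1 (hP : SelfSimilar P) : ∫ x, x ∂P = 2/3 := by
  have h := split hP (f := fun x => x) continuous_id
  simp only [S1, S2] at h
  have h1 : ∫ x, x/4 ∂P = (∫ x, x ∂P) / 4 := integral_div 4 _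
  have h2 : ∫ x, (x/2 + 1/2) ∂P = (∫ x, x ∂P)/2 + 1/2 := by
    have iA : Integrable (fun x : ℝ => x/2) P := int_P hP (by fun_prop)
    have iB : Integrable (fun _ : ℝ => (1:ℝ)/2) P := integrable_const _
    rw [integral_add iA iB, integral_div, integral_const]
    simp
  rw [h1, h2] at h
  linarith

lemma mom2 (hP : SelfSimilar P) : ∫ x, x^2 ∂P = 28/51 := by
  have hc2 : Continuous (fun x : ℝ => x^2) := continuous_pow 2
  have h := split hP (f := fun x => x^2) hc2
  simp only [S1, S2] at h
  have hm1 := mom1 hP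
  have hi2 : Integrable (fun x : ℝ => x^2) P := int_P hP hc2
  have hi1 : Integrable (fun x : ℝ => x) P := int_P hP continuous_id
  have h1 : ∫ x, (x/4)^2 ∂P = (∫ x, x^2 ∂P) / 16 := by
    have : ∀ x : ℝ, (x/4)^2 = x^2/16 := fun x => by ring
    simp only [this]
    exact integral_div 16 _
  have h2 : ∫ x, (x/2 + 1/2)^2 ∂P = (∫ x, x^2 ∂P)/4 + (∫ x, x ∂P)/2 + 1/4 := by
    have : ∀ x : ℝ, (x/2 + 1/2)^2 = x^2/4 + (x/2 + 1/4) := fun x => by ring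
    simp only [this]
    have iA : Integrable (fun x : ℝ => x^2/4) P := int_P hP (by fun_prop)
    have iB : Integrable (fun x : ℝ => x/2 + 1/4) P := int_P hP (by fun_prop)
    have iC : Integrable (fun x : ℝ => x/2) P := int_P hP (by fun_prop)
    have iD : Integrable (fun _ : ℝ => (1:ℝ)/4) P := integrable_const _
    rw [integral_add iA iB, integral_add iC iD, integral_div, integral_div, integral_const]
    simp
    ring
  rw [h1, h2, hm1] at h
  linarith

lemma affine_sq (hP : SelfSimilar P) (s t : ℝ) :
    ∫ x, (s*x + t)^2 ∂P = s^2*(28/51) + 2*s*t*(2/3) + t^2 := by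
  have hi2 : Integrable (fun x : ℝ => x^2) P := int_P hP (continuous_pow 2)
  have hi1 : Integrable (fun x : ℝ => x) P := int_P hP continuous_id
  have he : ∀ x : ℝ, (s*x + t)^2 = s^2*x^2 + ((2*s*t)*x + t^2) := fun x => by ring
  simp only [he]
  have iA : Integrable (fun x : ℝ => s^2*x^2) P := int_P hP (by fun_prop)
  have iB : Integrable (fun x : ℝ => (2*s*t)*x + t^2) P := int_P hP (by fun_prop)
  have iC : Integrable (fun x : ℝ => (2*s*t)*x) P := int_P hP (by fun_prop)
  have iD : Integrable (fun _ : ℝ => t^2) P := integrable_const _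
  rw [integral_add iA iB, integral_add iC iD,
    integral_const_mul, integral_const_mul, integral_const, mom1 hP, mom2 hP]
  simp
  ring

/-- The integrand. -/
def fm (a : ℝ) (x : ℝ) : ℝ := min ((x - a)^2) ((x - 1/4)^2)

lemma fm_cont (a : ℝ) : Continuous (fm a) :=
  (((continuous_id.sub continuous_const).pow 2).min
    ((continuous_id.sub continuous_const).pow 2))

lemma fm_aff_cont (a s t : ℝ) : Continuous (fun x => fm a (s*x + t)) :=
  (fm_cont a).comp (by fun_prop)

/-- Evaluation when the left branch of the min is active on [0,1]. -/
lemma U_eq_left (hP : SelfSimilar P) (a s t : ℝ)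
    (hcond : ∀ x ∈ Icc (0:ℝ) 1, (s*x + t - a)^2 ≤ (s*x + t - 1/4)^2) :
    ∫ x, fm a (s*x + t) ∂P = s^2*(28/51) + 2*s*(t-a)*(2/3) + (t-a)^2 := by
  have h : ∫ x, fm a (s*x + t) ∂P = ∫ x, (s*x + (t-a))^2 ∂P := by
    apply integral_congr_ae
    filter_upwards [supp_ae P hP] with x hx
    show min ((s*x + t - a)^2) ((s*x + t - 1/4)^2) = (s*x + (t-a))^2
    rw [min_eq_left (hcond x hx)]
    ring
  rw [h, affine_sq hP]

/-- Evaluation when the right branch of the min is active on [0,1]. -/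
lemma U_eq_right (hP : SelfSimilar P) (a s t : ℝ)
    (hcond : ∀ x ∈ Icc (0:ℝ) 1, (s*x + t - 1/4)^2 ≤ (s*x + t - a)^2) :
    ∫ x, fm a (s*x + t) ∂P = s^2*(28/51) + 2*s*(t-1/4)*(2/3) + (t-1/4)^2 := by
  have h : ∫ x, fm a (s*x + t) ∂P = ∫ x, (s*x + (t-1/4))^2 ∂P := by
    apply integral_congr_ae
    filter_upwards [supp_ae P hP] with x hx
    show min ((s*x + t - a)^2) ((s*x + t - 1/4)^2) = (s*x + (t-1/4))^2
    rw [min_eq_right (hcond x hx)]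
    ring
  rw [h, affine_sq hP]

/-- Lower bound via an auxiliary point `c`. -/
lemma U_ge (hP : SelfSimilar P) (a s t c : ℝ)
    (hcond : ∀ x ∈ Icc (0:ℝ) 1,
      (s*x + t - c)^2 ≤ (s*x + t - a)^2 ∧ (s*x + t - c)^2 ≤ (s*x + t - 1/4)^2) :
    s^2*(28/51) + 2*s*(t-c)*(2/3) + (t-c)^2 ≤ ∫ x, fm a (s*x + t) ∂P := by
  have h : ∫ x, (s*x + (t-c))^2 ∂P ≤ ∫ x, fm a (s*x + t) ∂P := by
    apply integral_mono_ae (int_P hP (by fun_prop)) (int_P hP (fm_aff_cont a s t))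
    filter_upwards [supp_ae P hP] with x hx
    show (s*x + (t-c))^2 ≤ min ((s*x + t - a)^2) ((s*x + t - 1/4)^2)
    have h1 := (hcond x hx).1
    have h2 := (hcond x hx).2
    apply le_min (by nlinarith) (by nlinarith)
  calc s^2*(28/51) + 2*s*(t-c)*(2/3) + (t-c)^2 = ∫ x, (s*x + (t-c))^2 ∂P :=
        (affine_sq hP s (t-c)).symm
    _ ≤ _ := h

lemma U_nonneg (a s t : ℝ) : 0 ≤ ∫ x, fm a (s*x + t) ∂P :=
  integral_nonneg fun x => le_min (sq_nonneg _) (sq_nonneg _)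

/-- Three-term decomposition of the distortion integral over `J₁`. -/
lemma decomp (hP : SelfSimilar P) (a : ℝ) :
    ∫ x in Icc (0:ℝ) (1/4), fm a x ∂P
      = (1/16) * ∫ x, fm a (1/16*x + 0) ∂P
      + (3/64) * ∫ x, fm a (1/32*x + 1/8) ∂P
      + (9/64) * ∫ x, fm a (1/16*x + 3/16) ∂P := by
  have s1 := split_set hP (fm_cont a)
  have s2 := split hP (f := fun x => fm a (S1 x)) ((fm_cont a).comp S1_cont)
  have s3 := split hP (f := fun x => fm a (S1 (S2 x)))
    ((fm_cont a).comp (S1_cont.comp S2_cont))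
  have e1 : (fun x => fm a (S1 (S1 x))) = (fun x => fm a (1/16*x + 0)) := by
    funext x; simp only [S1]; congr 1; ring
  have e2 : (fun x => fm a (S1 (S2 (S1 x)))) = (fun x => fm a (1/32*x + 1/8)) := by
    funext x; simp only [S1, S2]; congr 1; ring
  have e3 : (fun x => fm a (S1 (S2 (S2 x)))) = (fun x => fm a (1/16*x + 3/16)) := by
    funext x; simp only [S1, S2]; congr 1; ring
  rw [e1] at s2
  rw [e2, e3] at s3
  rw [s1, s2, s3]
  ring

/-- Further decomposition of the `J₁₂₁` term. -/
lemma decomp2 (hP : SelfSimilar P) (a : ℝ) :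
    ∫ x, fm a (1/32*x + 1/8) ∂P
      = (1/4) * ∫ x, fm a (1/128*x + 1/8) ∂P
      + (3/4) * ∫ x, fm a (1/64*x + 9/64) ∂P := by
  have s := split hP (f := fun x => fm a (1/32*x + 1/8)) (fm_aff_cont a _ _)
  have e1 : (fun x => fm a (1/32*(S1 x) + 1/8)) = (fun x => fm a (1/128*x + 1/8)) := by
    funext x; simp only [S1]; congr 1; ring
  have e2 : (fun x => fm a (1/32*(S2 x) + 1/8)) = (fun x => fm a (1/64*x + 9/64)) := by
    funext x; simp only [S1, S2]; congr 1; ring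
  rw [e1, e2] at s
  exact s

/-- Exact value on the middle region. -/
lemma Iexact (hP : SelfSimilar P) {a : ℝ} (h1 : 1/16 ≤ a) (h2 : a ≤ 1/8) :
    ∫ x in Icc (0:ℝ) (1/4), fm a x ∂P
      = (7/64)*(a - 29/336)^2 + 7711/17547264 := by
  rw [decomp hP,
    U_eq_left hP a (1/16) 0 (fun x hx => by
      obtain ⟨hx0, hx1⟩ := hx
      nlinarith [mul_nonneg (by linarith : (0:ℝ) ≤ 1/4 - a)
        (by linarith : (0:ℝ) ≤ 1/4 + a - x/8)]),
    U_eq_left hP a (1/32) (1/8) (fun x hx => by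
      obtain ⟨hx0, hx1⟩ := hx
      nlinarith [mul_nonneg (by linarith : (0:ℝ) ≤ 1/4 - a)
        (by linarith : (0:ℝ) ≤ a - x/16)]),
    U_eq_right hP a (1/16) (3/16) (fun x hx => by
      obtain ⟨hx0, hx1⟩ := hx
      nlinarith [mul_nonneg (by linarith : (0:ℝ) ≤ 1/4 - a)
        (by linarith : (0:ℝ) ≤ x/8 + 1/8 - a)])]
  ring

lemma IlbR1 (hP : SelfSimilar P) {a : ℝ} (h0 : 0 ≤ a) (h1 : a ≤ 1/64) :
    7711/17547264 < ∫ x in Icc (0:ℝ) (1/4), fm a x ∂P := by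
  rw [decomp hP,
    U_eq_left hP a (1/16) 0 (fun x hx => by
      obtain ⟨hx0, hx1⟩ := hx
      nlinarith [mul_nonneg (by linarith : (0:ℝ) ≤ 1/4 - a)
        (by linarith : (0:ℝ) ≤ 1/4 + a - x/8)]),
    U_eq_right hP a (1/16) (3/16) (fun x hx => by
      obtain ⟨hx0, hx1⟩ := hx
      nlinarith [mul_nonneg (by linarith : (0:ℝ) ≤ 1/4 - a)
        (by linarith : (0:ℝ) ≤ x/8 + 1/8 - a)])]
  have hU2 := U_ge hP a (1/32) (1/8) (1/16) (fun x hx => by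
    obtain ⟨hx0, hx1⟩ := hx
    constructor
    · nlinarith [mul_nonneg (by linarith : (0:ℝ) ≤ 1/16 - a)
        (by linarith : (0:ℝ) ≤ x/16 + 1/4 - a - 1/16)]
    · nlinarith [mul_nonneg (by norm_num : (0:ℝ) ≤ 1/4 - 1/16)
        (by linarith : (0:ℝ) ≤ 5/16 - (x/16 + 1/4))])
  nlinarith [hU2, sq_nonneg a]

lemma IlbR2 (hP : SelfSimilar P) {a : ℝ} (h0 : 1/64 ≤ a) (h1 : a ≤ 1/16) :
    7711/17547264 < ∫ x in Icc (0:ℝ) (1/4), fm a x ∂P := by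
  rw [decomp hP,
    U_eq_left hP a (1/16) 0 (fun x hx => by
      obtain ⟨hx0, hx1⟩ := hx
      nlinarith [mul_nonneg (by linarith : (0:ℝ) ≤ 1/4 - a)
        (by linarith : (0:ℝ) ≤ 1/4 + a - x/8)]),
    U_eq_right hP a (1/16) (3/16) (fun x hx => by
      obtain ⟨hx0, hx1⟩ := hx
      nlinarith [mul_nonneg (by linarith : (0:ℝ) ≤ 1/4 - a)
        (by linarith : (0:ℝ) ≤ x/8 + 1/8 - a)]),
    decomp2 hP,
    U_eq_left hP a (1/128) (1/8) (fun x hx => by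
      obtain ⟨hx0, hx1⟩ := hx
      nlinarith [mul_nonneg (by linarith : (0:ℝ) ≤ 1/4 - a)
        (by linarith : (0:ℝ) ≤ a - x/64)])]
  have hU2b := U_ge hP a (1/64) (9/64) (1/16) (fun x hx => by
    obtain ⟨hx0, hx1⟩ := hx
    constructor
    · nlinarith [mul_nonneg (by linarith : (0:ℝ) ≤ 1/16 - a)
        (by linarith : (0:ℝ) ≤ x/32 + 9/32 - a - 1/16)]
    · nlinarith [mul_nonneg (by norm_num : (0:ℝ) ≤ 1/4 - 1/16)
        (by linarith : (0:ℝ) ≤ 5/16 - (x/32 + 9/32))])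
  nlinarith [hU2b, sq_nonneg (a - 203/3648)]

lemma IlbR3 (hP : SelfSimilar P) {a : ℝ} (h0 : 1/8 ≤ a) (h1 : a < 1/4) :
    7711/17547264 < ∫ x in Icc (0:ℝ) (1/4), fm a x ∂P := by
  rw [decomp hP,
    U_eq_left hP a (1/16) 0 (fun x hx => by
      obtain ⟨hx0, hx1⟩ := hx
      nlinarith [mul_nonneg (by linarith : (0:ℝ) ≤ 1/4 - a)
        (by linarith : (0:ℝ) ≤ 1/4 + a - x/8)])]
  have h2 := U_nonneg (P := P) a (1/32) (1/8)
  have h3 := U_nonneg (P := P) a (1/16) (3/16)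
  nlinarith [mul_nonneg (by linarith : (0:ℝ) ≤ a - 1/8)
    (by linarith : (0:ℝ) ≤ a + 1/8 - 1/12)]

theorem stmt_14 (P : Measure ℝ) [IsProbabilityMeasure P] (hP : SelfSimilar P)
    (a : ℝ) (ha : 0 ≤ a) (hab : a < 1 / 4)
    (hmin : ∀ a' : ℝ, 0 ≤ a' → a' < 1 / 4 →
      (∫ x in J [0], min ((x - a) ^ 2) ((x - 1 / 4) ^ 2) ∂P) ≤
        ∫ x in J [0], min ((x - a') ^ 2) ((x - 1 / 4) ^ 2) ∂P) :
    a = 29 / 336 ∧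
    (∫ x in J [0], min ((x - a) ^ 2) ((x - 1 / 4) ^ 2) ∂P) = 7711 / 17547264 := by
  have hSw : Sw [0] = S1 := by funext x; simp [Sw]
  have hJ : J [0] = Icc (0:ℝ) (1/4) := by
    rw [J, hSw]
    ext y
    simp only [mem_image, mem_Icc]
    constructor
    · rintro ⟨x, ⟨h0, h1⟩, rfl⟩
      simp only [S1]
      constructor <;> linarith
    · rintro ⟨h0, h1⟩
      exact ⟨4*y, ⟨by linarith, by linarith⟩, by simp only [S1]; ring⟩
  have hrw : ∀ t : ℝ, (∫ x in J [0], min ((x - t) ^ 2) ((x - 1 / 4) ^ 2) ∂P)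
      = ∫ x in Icc (0:ℝ) (1/4), fm t x ∂P := by
    intro t; rw [hJ]; rfl
  have hle : (∫ x in Icc (0:ℝ) (1/4), fm a x ∂P) ≤ 7711/17547264 := by
    have h := hmin (29/336) (by norm_num) (by norm_num)
    rw [hrw a, hrw (29/336)] at h
    have hv : (∫ x in Icc (0:ℝ) (1/4), fm (29/336) x ∂P) = 7711/17547264 := by
      rw [Iexact hP (by norm_num) (by norm_num)]
      norm_num
    linarith
  have h4 : 1/16 ≤ a ∧ a ≤ 1/8 := by
    rcases le_or_gt a (1/64) with h | h
    · exact absurd hle (not_le.mpr (IlbR1 hP ha h))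
    rcases le_or_gt a (1/16) with h' | h'
    · exact absurd hle (not_le.mpr (IlbR2 hP h.le h'))
    rcases le_or_gt a (1/8) with h'' | h''
    · exact ⟨h'.le, h''⟩
    · exact absurd hle (not_le.mpr (IlbR3 hP h''.le hab))
  have hIa := Iexact hP h4.1 h4.2
  have ha29 : a = 29/336 := by
    rw [hIa] at hle
    nlinarith [sq_nonneg (a - 29/336)]
  refine ⟨ha29, ?_⟩
  rw [hrw a, hIa, ha29]
  norm_num
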